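/- Let 0 < q ≤ 1 ≤ r and suppose the m×n matrix A satisfies the t-truncated (l_r,l_q)–l_p sparse approximation property of order k with constants D ∈ (0,∞) and β ∈ (0,1), for sets T of cardinality t. Suppose v ∈ ℝⁿ, K ⊆ T indexes the k largest entries of v_T, and |Tᶜ| ≤ k, with k − |Tᶜ| ≤ |T ∩ K|. Then ‖v_{Tᶜ}‖_r^q ≤ D‖Av‖_p^q + β k^{q/r−1}‖v_{T∩Kᶜ}‖_q^q. -/

import Mathlib

open Finset Matrix

/-- `x` restricted to index set `S` (zero outside `S`). -/
noncomputable def restr {n : ℕ} (S : Finset (Fin n)) (x : Fin n → ℝ) : Fin n → ℝ :=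
  fun j => if j ∈ S then x j else 0

/-- The `ℓ_p` (quasi)norm `(∑ |x_j|^p)^{1/p}`. -/
noncomputable def lnorm {n : ℕ} (p : ℝ) (x : Fin n → ℝ) : ℝ :=
  (∑ j, |x j| ^ p) ^ (1 / p)

/-- The `q`-th power of the `ℓ_q` quasinorm, `∑ |x_j|^q`. -/
noncomputable def lqq {n : ℕ} (q : ℝ) (x : Fin n → ℝ) : ℝ :=
  ∑ j, |x j| ^ q

/-- `K ⊆ T` is an index set of `k` largest-in-magnitude coefficients of `x` on `T`. -/
def IsLargest {n : ℕ} (x : Fin n → ℝ) (T K : Finset (Fin n)) (k : ℕ) : Prop :=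
  K ⊆ T ∧ K.card = k ∧ ∀ i ∈ K, ∀ j ∈ T \ K, |x j| ≤ |x i|

/-- Number of nonzero entries (the `ℓ_0` "norm"). -/
noncomputable def spt {n : ℕ} (x : Fin n → ℝ) : ℕ := (Function.support x).ncard

/-- `t`-truncated `(l_r,l_q)-l_p` sparse approximation property of order `k`
with constants `D` and `β`. -/
def TruncSAP {m n : ℕ} (A : Matrix (Fin m) (Fin n) ℝ) (t k : ℕ) (r q p D β : ℝ) : Prop :=
  ∀ (x : Fin n → ℝ) (T K : Finset (Fin n)), T.card = t → IsLargest x T K k →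
    lnorm r (restr K x) ^ q ≤
      D * lnorm p (A.mulVec x) ^ q + β * (k : ℝ) ^ (q / r - 1) * lqq q (restr (T \ K) x)

lemma exists_largest {n : ℕ} (x : Fin n → ℝ) (k : ℕ) (S : Finset (Fin n)) (hk : k ≤ S.card) :
    ∃ K, K ⊆ S ∧ K.card = k ∧ ∀ i ∈ K, ∀ j ∈ S \ K, |x j| ≤ |x i| := by
  induction k generalizing S with
  | zero => exact ⟨∅, empty_subset _, rfl, by simp⟩
  | succ k ih =>
    have hS : S.Nonempty := card_pos.mp (by omega)
    obtain ⟨i₀, hi₀S, hi₀⟩ := S.exists_max_image (fun j => |x j|) hS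
    have hcard : k ≤ (S.erase i₀).card := by rw [card_erase_of_mem hi₀S]; omega
    obtain ⟨K, hKS, hKc, hKl⟩ := ih _ hcard
    refine ⟨insert i₀ K, ?_, ?_, ?_⟩
    · exact insert_subset hi₀S (hKS.trans (erase_subset _ _))
    · rw [card_insert_of_notMem (fun h => (mem_erase.mp (hKS h)).1 rfl), hKc]
    · intro i hi j hj
      rcases mem_insert.mp hi with rfl | hi
      · exact hi₀ j (mem_sdiff.mp hj).1
      · refine hKl i hi j ?_
        rw [mem_sdiff] at hj ⊢
        exact ⟨mem_erase.mpr ⟨fun h => hj.2 (h ▸ mem_insert_self _ _), hj.1⟩,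
          fun h => hj.2 (mem_insert_of_mem h)⟩

lemma sum_le_largest {n : ℕ} (w : Fin n → ℝ) (hw : ∀ j, 0 ≤ w j)
    (Tt Kt J : Finset (Fin n)) (hJT : J ⊆ Tt)
    (hcard : J.card ≤ Kt.card)
    (hl : ∀ i ∈ Kt, ∀ j ∈ Tt \ Kt, w j ≤ w i) :
    ∑ j ∈ J, w j ≤ ∑ j ∈ Kt, w j := by
  have h1 : ∑ j ∈ J \ Kt, w j ≤ ∑ j ∈ Kt \ J, w j := by
    rcases (J \ Kt).eq_empty_or_nonempty with he | hne
    · rw [he, sum_empty]; exact sum_nonneg fun j _ => hw j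
    · have hc : (J \ Kt).card ≤ (Kt \ J).card := by
        have h1 := card_sdiff_add_card_inter J Kt
        have h2 := card_sdiff_add_card_inter Kt J
        rw [inter_comm] at h2
        omega
      have hne' : (Kt \ J).Nonempty := card_pos.mp (lt_of_lt_of_le (card_pos.mpr hne) hc)
      obtain ⟨i₀, hi₀, hmin⟩ := (Kt \ J).exists_min_image w hne'
      calc ∑ j ∈ J \ Kt, w j ≤ ∑ _j ∈ J \ Kt, w i₀ := by
            refine sum_le_sum fun j hj => ?_
            have hjm := mem_sdiff.mp hj
            exact hl i₀ (mem_sdiff.mp hi₀).1 j (mem_sdiff.mpr ⟨hJT hjm.1, hjm.2⟩)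
        _ = (J \ Kt).card * w i₀ := by rw [sum_const, nsmul_eq_mul]
        _ ≤ (Kt \ J).card * w i₀ :=
            mul_le_mul_of_nonneg_right (by exact_mod_cast hc) (hw i₀)
        _ ≤ ∑ j ∈ Kt \ J, w j := by
            calc ((Kt \ J).card : ℝ) * w i₀ = ∑ _j ∈ Kt \ J, w i₀ := by
                  rw [sum_const, nsmul_eq_mul]
              _ ≤ _ := sum_le_sum fun j hj => hmin j hj
  calc ∑ j ∈ J, w j = ∑ j ∈ J ∩ Kt, w j + ∑ j ∈ J \ Kt, w j :=
        (sum_inter_add_sum_sdiff ..).symm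
    _ ≤ ∑ j ∈ Kt ∩ J, w j + ∑ j ∈ Kt \ J, w j := by
        rw [inter_comm]; exact add_le_add le_rfl h1
    _ = ∑ j ∈ Kt, w j := sum_inter_add_sum_sdiff ..

lemma lqq_restr {n : ℕ} (q : ℝ) (hq : q ≠ 0) (S : Finset (Fin n)) (v : Fin n → ℝ) :
    lqq q (restr S v) = ∑ j ∈ S, |v j| ^ q := by
  unfold lqq restr
  rw [← Finset.sum_filter_of_ne (p := (· ∈ S)) (fun j _ h => by
    by_contra hjS
    simp [if_neg hjS, Real.zero_rpow hq] at h)]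
  refine Finset.sum_congr (by simp) fun j hj => ?_
  rw [if_pos (by simpa using hj)]

lemma lnorm_restr {n : ℕ} (r : ℝ) (hr : r ≠ 0) (S : Finset (Fin n)) (v : Fin n → ℝ) :
    lnorm r (restr S v) = (∑ j ∈ S, |v j| ^ r) ^ (1 / r) := by
  unfold lnorm
  congr 1
  exact lqq_restr r hr S v

/-- bound on `‖v_{Tᶜ}‖_r^q` (case `|Tᶜ| ≤ k`) via the truncated
sparse approximation property. -/
theorem stmt17 {m n : ℕ} (A : Matrix (Fin m) (Fin n) ℝ) (t k : ℕ)
    (r q p D β : ℝ) (hq0 : 0 < q) (hq1 : q ≤ 1) (hr : 1 ≤ r)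
    (hD : 0 < D) (hβ0 : 0 < β) (hβ1 : β < 1)
    (hSAP : TruncSAP A t k r q p D β)
    (v : Fin n → ℝ) (T K : Finset (Fin n)) (hT : T.card = t)
    (hK : IsLargest v T K k)
    (hTc : Tᶜ.card ≤ k) (hk : k ≤ (T ∩ K).card + Tᶜ.card) :
    lnorm r (restr Tᶜ v) ^ q ≤
      D * lnorm p (A.mulVec v) ^ q +
        β * (k : ℝ) ^ (q / r - 1) * lqq q (restr (T \ K) v) := by
  obtain ⟨hKT, hKcard, hKlarge⟩ := hK
  have hq : q ≠ 0 := ne_of_gt hq0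
  have hr0 : (0:ℝ) < r := lt_of_lt_of_le one_pos hr
  have hrne : r ≠ 0 := ne_of_gt hr0
  have hkn : k ≤ n := by
    calc k = K.card := hKcard.symm
      _ ≤ (univ : Finset (Fin n)).card := card_le_card (subset_univ K)
      _ = n := by simp
  have hkt : k ≤ t := by
    calc k = K.card := hKcard.symm
      _ ≤ T.card := card_le_card hKT
      _ = t := hT
  have htc : t + Tᶜ.card = n := by
    have h := T.card_add_card_compl
    rw [hT, Fintype.card_fin] at h
    exact h
  -- choose K' ⊆ K with card k - |Tᶜ|
  obtain ⟨K', hK'K, hK'card⟩ :=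
    Finset.exists_subset_card_eq (show k - Tᶜ.card ≤ K.card by omega)
  set Tt := Kᶜ ∪ K' with hTt
  have hdisj : Disjoint Kᶜ K' := (disjoint_compl_left).mono_right hK'K
  have hKc_card : Kᶜ.card = n - k := by
    rw [Finset.card_compl, hKcard]; simp
  have hTt_card : Tt.card = t := by
    rw [hTt, card_union_of_disjoint hdisj, hKc_card, hK'card]; omega
  have hkTt : k ≤ Tt.card := by omega
  obtain ⟨Kt, hKtT, hKtcard, hKtl⟩ := exists_largest v k Tt hkTt
  have hmain := hSAP v Tt Kt hTt_card ⟨hKtT, hKtcard, hKtl⟩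
  -- J := Tᶜ ∪ K'
  set J := Tᶜ ∪ K' with hJ
  have hTcKc : Tᶜ ⊆ Kᶜ := Finset.compl_subset_compl.mpr hKT
  have hJT : J ⊆ Tt := union_subset (hTcKc.trans subset_union_left) subset_union_right
  have hJdisj : Disjoint Tᶜ K' := (disjoint_compl_left).mono_right (hK'K.trans hKT)
  have hJcard : J.card = k := by
    rw [hJ, card_union_of_disjoint hJdisj, hK'card]; omega
  -- step 1 : r-sums
  have hwr : ∀ i ∈ Kt, ∀ j ∈ Tt \ Kt, |v j| ^ r ≤ |v i| ^ r := fun i hi j hj =>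
    Real.rpow_le_rpow (abs_nonneg _) (hKtl i hi j hj) hr0.le
  have hsum_r : ∑ j ∈ Tᶜ, |v j| ^ r ≤ ∑ j ∈ Kt, |v j| ^ r :=
    sum_le_largest _ (fun j => Real.rpow_nonneg (abs_nonneg _) r) Tt Kt Tᶜ
      (hTcKc.trans subset_union_left) (by omega) hwr
  have hstep1 : lnorm r (restr Tᶜ v) ^ q ≤ lnorm r (restr Kt v) ^ q := by
    rw [lnorm_restr r hrne, lnorm_restr r hrne]
    have h0 : (0:ℝ) ≤ ∑ j ∈ Tᶜ, |v j| ^ r :=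
      sum_nonneg fun j _ => Real.rpow_nonneg (abs_nonneg _) r
    exact Real.rpow_le_rpow (Real.rpow_nonneg h0 _)
      (Real.rpow_le_rpow h0 hsum_r (by positivity)) hq0.le
  -- step 2 : q-sums residual
  have hwq : ∀ i ∈ Kt, ∀ j ∈ Tt \ Kt, |v j| ^ q ≤ |v i| ^ q := fun i hi j hj =>
    Real.rpow_le_rpow (abs_nonneg _) (hKtl i hi j hj) hq0.le
  have hqnn : ∀ j : Fin n, (0:ℝ) ≤ |v j| ^ q := fun j => Real.rpow_nonneg (abs_nonneg _) q
  have hsumJ : ∑ j ∈ J, |v j| ^ q ≤ ∑ j ∈ Kt, |v j| ^ q :=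
    sum_le_largest _ hqnn Tt Kt J hJT (by omega) hwq
  have hTtJ : ∑ j ∈ Tt \ J, |v j| ^ q + ∑ j ∈ J, |v j| ^ q = ∑ j ∈ Tt, |v j| ^ q :=
    Finset.sum_sdiff hJT
  have hTtKt : ∑ j ∈ Tt \ Kt, |v j| ^ q + ∑ j ∈ Kt, |v j| ^ q = ∑ j ∈ Tt, |v j| ^ q :=
    Finset.sum_sdiff hKtT
  have hsub : Tt \ J ⊆ T \ K := by
    intro x hx
    rw [mem_sdiff] at hx ⊢
    obtain ⟨hx1, hx2⟩ := hx
    rw [hJ, mem_union, not_or] at hx2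
    rw [hTt, mem_union] at hx1
    refine ⟨by simpa using hx2.1, ?_⟩
    rcases hx1 with h | h
    · simpa using h
    · exact absurd h hx2.2
  have hstep2 : lqq q (restr (Tt \ Kt) v) ≤ lqq q (restr (T \ K) v) := by
    rw [lqq_restr q hq, lqq_restr q hq]
    calc ∑ j ∈ Tt \ Kt, |v j| ^ q ≤ ∑ j ∈ Tt \ J, |v j| ^ q := by linarith
      _ ≤ ∑ j ∈ T \ K, |v j| ^ q :=
        sum_le_sum_of_subset_of_nonneg hsub (fun j _ _ => hqnn j)
  have hcoef : (0:ℝ) ≤ β * (k : ℝ) ^ (q / r - 1) :=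
    mul_nonneg hβ0.le (Real.rpow_nonneg (Nat.cast_nonneg k) _)
  calc lnorm r (restr Tᶜ v) ^ q ≤ lnorm r (restr Kt v) ^ q := hstep1
    _ ≤ D * lnorm p (A.mulVec v) ^ q + β * (k : ℝ) ^ (q / r - 1) * lqq q (restr (Tt \ Kt) v) :=
        hmain
    _ ≤ D * lnorm p (A.mulVec v) ^ q + β * (k : ℝ) ^ (q / r - 1) * lqq q (restr (T \ K) v) := by
        exact add_le_add le_rfl (mul_le_mul_of_nonneg_left hstep2 hcoef)
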